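/- The transitive closure of the edge relation of the generator graph produced by the algorithm equals the returns-before relation: for all operations a, b of a finite history, a ⟶rb b if and only if there is a directed path from a to b in the generator graph. -/
import Mathlib


/-- An operation with a process, a start time and a return time. -/
structure Op (P : Type*) where
  proc : P
  stime : ℝ
  rtime : ℝ
  wellFormed : stime < rtime

/-- Returns-before relation. -/
def rb {P : Type*} (a b : Op P) : Prop := a.rtime < b.stime

/-- `b` is a direct successor of `a` on process `p` in `H`. -/
def dsuc {P : Type*} (H : Finset (Op P)) (p : P) (a b : Op P) : Prop :=
  b.proc = p ∧ rb a b ∧ ¬ ∃ c ∈ H, c.proc = p ∧ rb a c ∧ rb c b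

private lemma rb_trans {P : Type*} {a b c : Op P} (h1 : rb a b) (h2 : rb b c) : rb a c := by
  unfold rb at *
  have := b.wellFormed
  linarith

open Classical in
private lemma rb_to_path {P : Type*} (H : Finset (Op P))
    (E : Op P → Op P → Prop)
    (hpath : ∀ a ∈ H, ∀ b ∈ H, dsuc H b.proc a b → Relation.TransGen E a b) :
    ∀ n : ℕ, ∀ a ∈ H, ∀ b ∈ H,
      (H.filter (fun c => rb a c ∧ rb c b)).card ≤ n →
      rb a b → Relation.TransGen E a b := by
  intro n
  induction n with
  | zero =>
    intro a ha b hb hcard hab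
    apply hpath a ha b hb
    refine ⟨rfl, hab, ?_⟩
    rintro ⟨c, hc, _, hac, hcb⟩
    have : c ∈ H.filter (fun c => rb a c ∧ rb c b) := by
      simp [Finset.mem_filter, hc, hac, hcb]
    have := Finset.card_pos.mpr ⟨c, this⟩
    omega
  | succ n ih =>
    intro a ha b hb hcard hab
    by_cases hds : ∃ c ∈ H, c.proc = b.proc ∧ rb a c ∧ rb c b
    · obtain ⟨c, hc, _, hac, hcb⟩ := hds
      have hsub1 : H.filter (fun d => rb a d ∧ rb d c) ⊆ H.filter (fun d => rb a d ∧ rb d b) := by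
        intro d hd
        simp only [Finset.mem_filter] at *
        exact ⟨hd.1, hd.2.1, rb_trans hd.2.2 hcb⟩
      have hsub2 : H.filter (fun d => rb c d ∧ rb d b) ⊆ H.filter (fun d => rb a d ∧ rb d b) := by
        intro d hd
        simp only [Finset.mem_filter] at *
        exact ⟨hd.1, rb_trans hac hd.2.1, hd.2.2⟩
      have hcmem : c ∈ H.filter (fun d => rb a d ∧ rb d b) := by
        simp [Finset.mem_filter, hc, hac, hcb]
      have hcnot1 : c ∉ H.filter (fun d => rb a d ∧ rb d c) := by
        simp only [Finset.mem_filter, not_and]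
        intro _ _
        unfold rb
        have := c.wellFormed
        linarith
      have hcnot2 : c ∉ H.filter (fun d => rb c d ∧ rb d b) := by
        simp only [Finset.mem_filter, not_and]
        intro _ h
        unfold rb at h
        have := c.wellFormed
        linarith
      have h1 : (H.filter (fun d => rb a d ∧ rb d c)).card ≤ n := by
        have := Finset.card_lt_card (Finset.ssubset_iff_of_subset hsub1 |>.mpr ⟨c, hcmem, hcnot1⟩)
        omega
      have h2 : (H.filter (fun d => rb c d ∧ rb d b)).card ≤ n := by
        have := Finset.card_lt_card (Finset.ssubset_iff_of_subset hsub2 |>.mpr ⟨c, hcmem, hcnot2⟩)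
        omega
      exact (ih a ha c hc h1 hac).trans (ih c hc b hb h2 hcb)
    · apply hpath a ha b hb
      exact ⟨rfl, hab, hds⟩

/-- The transitive closure of the generator graph's edge relation equals
the returns-before relation: for operations `a, b` of the history,
`a ⟶rb b` iff there is a directed path from `a` to `b` in the graph.
The graph is assumed to satisfy: (i) every edge goes to a direct
successor, and (ii) for every operation and each of its direct
successors, a path between them exists. -/
theorem transGen_eq_rb {P : Type*} (H : Finset (Op P))
    (hdistinct : ∀ a ∈ H, ∀ b ∈ H, a ≠ b →
      a.stime ≠ b.stime ∧ a.stime ≠ b.rtime ∧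
      a.rtime ≠ b.stime ∧ a.rtime ≠ b.rtime)
    (hsameproc : ∀ a ∈ H, ∀ b ∈ H, a ≠ b → a.proc = b.proc →
      rb a b ∨ rb b a)
    (E : Op P → Op P → Prop)
    (hE : ∀ a b, E a b → a ∈ H ∧ b ∈ H ∧ dsuc H b.proc a b)
    (hpath : ∀ a ∈ H, ∀ b ∈ H, dsuc H b.proc a b → Relation.TransGen E a b)
    (a : Op P) (ha : a ∈ H) (b : Op P) (hb : b ∈ H) :
    rb a b ↔ Relation.TransGen E a b := by
  constructor
  · intro hab
    classical
    exact rb_to_path H E hpath (H.filter (fun c => rb a c ∧ rb c b)).card a ha b hb le_rfl hab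
  · intro h
    induction h with
    | single h => exact (hE _ _ h).2.2.2.1
    | tail _ h ih => exact rb_trans (ih (hE _ _ h).1) (hE _ _ h).2.2.2.1
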